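/- Let δ ≥ 0 and let X be a δ-hyperbolic geodesic metric space. Let ζ be a geodesic segment in X, let z be a point of X, and let z' be a nearest point to z on ζ. Then for every point p ∈ ζ one has dist p z' ≤ dist p z + 6δ. (Lemma 5.5 of the paper.) -/

import Mathlib

/-- A subset `G` of a metric space is a geodesic segment with endpoints `x` and `y`
if it is the image of an isometric parametrization of a real interval `[a,b]`
with `γ a = x` and `γ b = y`. -/
def IsGeodesicSegmentBetween {X : Type*} [MetricSpace X] (G : Set X) (x y : X) : Prop :=
  ∃ (a b : ℝ) (γ : ℝ → X), a ≤ b ∧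
    (∀ s ∈ Set.Icc a b, ∀ t ∈ Set.Icc a b, dist (γ s) (γ t) = |s - t|) ∧
    γ '' Set.Icc a b = G ∧ γ a = x ∧ γ b = y

/-- A geodesic segment is a geodesic segment between some pair of endpoints. -/
def IsGeodesicSegment {X : Type*} [MetricSpace X] (G : Set X) : Prop :=
  ∃ x y : X, IsGeodesicSegmentBetween G x y

/-- A metric space is geodesic if any two points are the endpoints of some
geodesic segment. -/
def GeodesicMetricSpace (X : Type*) [MetricSpace X] : Prop :=
  ∀ x y : X, ∃ G : Set X, IsGeodesicSegmentBetween G x y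

/-- `δ`-hyperbolicity via thin triangles: each side of any geodesic triangle is
contained in the closed `δ`-neighborhood of the union of the other two sides. -/
def IsDeltaHyperbolic (X : Type*) [MetricSpace X] (δ : ℝ) : Prop :=
  ∀ (x y z : X) (G₁ G₂ G₃ : Set X),
    IsGeodesicSegmentBetween G₁ x y → IsGeodesicSegmentBetween G₂ y z →
      IsGeodesicSegmentBetween G₃ x z →
        (∀ p ∈ G₁, ∃ q ∈ G₂ ∪ G₃, dist p q ≤ δ) ∧
        (∀ p ∈ G₂, ∃ q ∈ G₁ ∪ G₃, dist p q ≤ δ) ∧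
        (∀ p ∈ G₃, ∃ q ∈ G₁ ∪ G₂, dist p q ≤ δ)

/-- `a` is a nearest point to `x` on the subset `A`. -/
def IsNearestPointOn {X : Type*} [MetricSpace X] (x : X) (A : Set X) (a : X) : Prop :=
  a ∈ A ∧ ∀ p ∈ A, dist x a ≤ dist x p

open Set Metric

lemma seg_symm {X : Type*} [MetricSpace X] {G : Set X} {x y : X}
    (h : IsGeodesicSegmentBetween G x y) : IsGeodesicSegmentBetween G y x := by
  obtain ⟨a, b, γ, hab, hiso, him, ha, hb⟩ := h
  refine ⟨a, b, fun u => γ (a + b - u), hab, ?_, ?_, by simpa, by simpa⟩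
  · intro s hs t ht
    have hs' : a + b - s ∈ Icc a b := by constructor <;> [linarith [hs.2]; linarith [hs.1]]
    have ht' : a + b - t ∈ Icc a b := by constructor <;> [linarith [ht.2]; linarith [ht.1]]
    rw [hiso _ hs' _ ht']
    rw [abs_sub_comm]; ring_nf
  · rw [← him]
    have : (fun u => a + b - u) '' Icc a b = Icc a b := by
      rw [Set.image_const_sub_Icc]; congr 1 <;> ring
    rw [show (fun u => γ (a + b - u)) = γ ∘ (fun u => a + b - u) from rfl,
      Set.image_comp, this]

lemma seg_mem_left {X : Type*} [MetricSpace X] {G : Set X} {x y : X}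
    (h : IsGeodesicSegmentBetween G x y) : x ∈ G := by
  obtain ⟨a, b, γ, hab, _, him, ha, _⟩ := h
  rw [← him, ← ha]; exact ⟨a, ⟨le_refl a, hab⟩, rfl⟩

lemma seg_mem_right {X : Type*} [MetricSpace X] {G : Set X} {x y : X}
    (h : IsGeodesicSegmentBetween G x y) : y ∈ G := seg_mem_left (seg_symm h)

lemma seg_compact {X : Type*} [MetricSpace X] {G : Set X} {x y : X}
    (h : IsGeodesicSegmentBetween G x y) : IsCompact G ∧ IsPreconnected G := by
  obtain ⟨a, b, γ, hab, hiso, him, _, _⟩ := h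
  have hlip : LipschitzOnWith 1 γ (Icc a b) := by
    intro s hs t ht
    rw [edist_nndist, edist_nndist, ← ENNReal.coe_mul]
    norm_cast
    rw [← NNReal.coe_le_coe]
    push_cast
    rw [hiso s hs t ht]
    simp [Real.dist_eq]
  have hcont := hlip.continuousOn
  exact ⟨him ▸ isCompact_Icc.image_of_continuousOn hcont,
    him ▸ isPreconnected_Icc.image γ hcont⟩

lemma seg_dist_add {X : Type*} [MetricSpace X] {G : Set X} {x y q : X}
    (h : IsGeodesicSegmentBetween G x y) (hq : q ∈ G) :
    dist x q + dist q y = dist x y := by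
  obtain ⟨a, b, γ, hab, hiso, him, ha, hb⟩ := h
  rw [← him] at hq
  obtain ⟨u, hu, rfl⟩ := hq
  rw [← ha, ← hb, hiso a ⟨le_refl a, hab⟩ u hu, hiso u hu b ⟨hab, le_refl b⟩,
    hiso a ⟨le_refl a, hab⟩ b ⟨hab, le_refl b⟩,
    abs_of_nonpos (by linarith [hu.1]), abs_of_nonpos (by linarith [hu.2]),
    abs_of_nonpos (by linarith)]
  ring

lemma seg_sub {X : Type*} [MetricSpace X] {a b : ℝ} {γ : ℝ → X}
    (hiso : ∀ s ∈ Set.Icc a b, ∀ t ∈ Set.Icc a b, dist (γ s) (γ t) = |s - t|)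
    {s t : ℝ} (hs : s ∈ Set.Icc a b) (ht : t ∈ Set.Icc a b) (hst : s ≤ t) :
    IsGeodesicSegmentBetween (γ '' Set.Icc s t) (γ s) (γ t) := by
  have hsub : Icc s t ⊆ Icc a b := Icc_subset_Icc hs.1 ht.2
  exact ⟨s, t, γ, hst, fun u hu v hv => hiso u (hsub hu) v (hsub hv), rfl, rfl, rfl⟩

theorem dist_to_projection_le'
    {X : Type*} [MetricSpace X] (δ : ℝ) (hδ : 0 ≤ δ)
    (hgeo : ∀ x y : X, ∃ G : Set X, IsGeodesicSegmentBetween G x y)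
    (hhyp : ∀ (x y z : X) (G₁ G₂ G₃ : Set X),
      IsGeodesicSegmentBetween G₁ x y → IsGeodesicSegmentBetween G₂ y z →
        IsGeodesicSegmentBetween G₃ x z →
          (∀ p ∈ G₁, ∃ q ∈ G₂ ∪ G₃, dist p q ≤ δ) ∧
          (∀ p ∈ G₂, ∃ q ∈ G₁ ∪ G₃, dist p q ≤ δ) ∧
          (∀ p ∈ G₃, ∃ q ∈ G₁ ∪ G₂, dist p q ≤ δ))
    (ζ : Set X) (hζ : ∃ x y : X, IsGeodesicSegmentBetween ζ x y)
    (z z' : X) (hz'ζ : z' ∈ ζ) (hnear : ∀ p ∈ ζ, dist z z' ≤ dist z p) :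
    ∀ p ∈ ζ, dist p z' ≤ dist p z + 6 * δ := by
  intro p hp
  obtain ⟨x, y, a, b, γ, hab, hiso, him, hγa, hγb⟩ := hζ
  rw [← him] at hp hz'ζ
  obtain ⟨s, hs, rfl⟩ := hp
  obtain ⟨t, ht, rfl⟩ := hz'ζ
  -- subsegment ζ' of ζ between p = γ s and z' = γ t
  obtain ⟨ζ', hζ'sub, hζ'⟩ :
      ∃ ζ' : Set X, ζ' ⊆ ζ ∧ IsGeodesicSegmentBetween ζ' (γ s) (γ t) := by
    rcases le_total s t with h | h
    · exact ⟨γ '' Icc s t, him ▸ Set.image_mono (f := γ) (Icc_subset_Icc hs.1 ht.2),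
        seg_sub hiso hs ht h⟩
    · exact ⟨γ '' Icc t s, him ▸ Set.image_mono (f := γ) (Icc_subset_Icc ht.1 hs.2),
        seg_symm (seg_sub hiso ht hs h)⟩
  set p := γ s
  set z' := γ t
  obtain ⟨H, hH⟩ := hgeo z' z
  obtain ⟨G, hG⟩ := hgeo p z
  obtain ⟨thin, -, -⟩ := hhyp p z' z ζ' H G hζ' hH hG
  have hHne : H.Nonempty := ⟨z', seg_mem_left hH⟩
  have hGne : G.Nonempty := ⟨p, seg_mem_left hG⟩
  have hHc := (seg_compact hH).1
  have hGc := (seg_compact hG).1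
  -- find m ∈ ζ' close to both H and G
  obtain ⟨m, hmζ', hm⟩ : ∃ m ∈ ζ', infDist m H ≤ δ ∧ infDist m G ≤ δ := by
    have hconn := (seg_compact hζ').2
    have hA : IsClosed {m : X | infDist m H ≤ δ} :=
      isClosed_le (continuous_infDist_pt H) continuous_const
    have hB : IsClosed {m : X | infDist m G ≤ δ} :=
      isClosed_le (continuous_infDist_pt G) continuous_const
    have hcover : ζ' ⊆ {m : X | infDist m H ≤ δ} ∪ {m : X | infDist m G ≤ δ} := by
      intro m hm
      obtain ⟨q, hq, hdq⟩ := thin m hm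
      rcases hq with hq | hq
      · exact Or.inl (le_trans (infDist_le_dist_of_mem hq) hdq)
      · exact Or.inr (le_trans (infDist_le_dist_of_mem hq) hdq)
    have h1 : (ζ' ∩ {m : X | infDist m H ≤ δ}).Nonempty :=
      ⟨z', seg_mem_right hζ', by
        simpa [infDist_zero_of_mem (seg_mem_left hH)] using hδ⟩
    have h2 : (ζ' ∩ {m : X | infDist m G ≤ δ}).Nonempty :=
      ⟨p, seg_mem_left hζ', by
        simpa [infDist_zero_of_mem (seg_mem_left hG)] using hδ⟩
    obtain ⟨m, hm1, hm2, hm3⟩ :=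
      isPreconnected_closed_iff.mp hconn _ _ hA hB hcover h1 h2
    exact ⟨m, hm1, hm2, hm3⟩
  obtain ⟨q, hqH, hq⟩ := hHc.exists_infDist_eq_dist hHne m
  obtain ⟨r, hrG, hr⟩ := hGc.exists_infDist_eq_dist hGne m
  have hmq : dist m q ≤ δ := hq ▸ hm.1
  have hmr : dist m r ≤ δ := hr ▸ hm.2
  have hq_add : dist z' q + dist q z = dist z' z := seg_dist_add hH hqH
  have hr_add : dist p r + dist r z = dist p z := seg_dist_add hG hrG
  have hnear_m : dist z z' ≤ dist z m := hnear m (hζ'sub hmζ')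
  have h1 : dist z m ≤ dist z q + dist q m := dist_triangle z q m
  have h2 : dist p z' ≤ dist p r + dist r m + dist m q + dist q z' := by
    calc dist p z' ≤ dist p m + dist m z' := dist_triangle p m z'
      _ ≤ (dist p r + dist r m) + (dist m q + dist q z') := by
          gcongr ?_ + ?_; exacts [dist_triangle p r m, dist_triangle m q z']
      _ = dist p r + dist r m + dist m q + dist q z' := by ring
  have e1 : dist q m = dist m q := dist_comm q m
  have e2 : dist z q = dist q z := dist_comm z q
  have e3 : dist z z' = dist z' z := dist_comm z z'
  have e4 : dist q z' = dist z' q := dist_comm q z'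
  have e5 : dist r m = dist m r := dist_comm r m
  -- from nearest point: dist z' q ≤ δ
  have hz'q : dist z' q ≤ δ := by
    have := dist_nonneg (x := z') (y := q); linarith
  linarith [dist_nonneg (x := r) (y := z)]

/-- Lemma 5.5: if `z'` is a nearest point to `z` on a geodesic segment `ζ`,
then for every `p ∈ ζ` one has `dist p z' ≤ dist p z + 6δ`. -/
theorem dist_to_projection_le
    {X : Type*} [MetricSpace X] (δ : ℝ) (hδ : 0 ≤ δ)
    (hgeo : GeodesicMetricSpace X) (hhyp : IsDeltaHyperbolic X δ)
    (ζ : Set X) (hζ : IsGeodesicSegment ζ)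
    (z z' : X) (hz' : IsNearestPointOn z ζ z') :
    ∀ p ∈ ζ, dist p z' ≤ dist p z + 6 * δ := by
  obtain ⟨hz'mem, hnear⟩ := hz'
  exact dist_to_projection_le' δ hδ hgeo hhyp ζ hζ z z' hz'mem hnear
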